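/- arXiv:1605.04518 — 2 statements merged into one kernel-verified Lean document; each statement's English description precedes it below -/
import Mathlib

section
/- Let V be a real topological vector space, let q : V → ℝ be a continuous weak Minkowski norm, and let P := { p ∈ V' | ⟨p,x⟩ ≤ q(x) for all x ∈ V }. A function f : V → ℝ is nonexpansive with respect to q if, and only if, for every x ∈ V, f(x) = max_{y ∈ V} min_{p ∈ P} ( ⟨p,x−y⟩ + f(y) ), where the inner minimum over P is attained for each y and the outer supremum over y is attained. -/
/-!
A continuous weak Minkowski norm `q` is the upper envelope of the continuous linear forms it
dominates: by Hahn–Banach, for every `v` some `p ∈ P` attains `p v = q v`. Hence the inner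
minimum is `min_{p ∈ P} (p (x - y) + f y) = f y - q (y - x)`, and
`max_y (f y - q (y - x)) = f x`, attained at `y = x`, says exactly that `f` is nonexpansive.
-/

open Filter Topology

section WeakMinkowskiNorm

variable {V : Type*} [AddCommGroup V] [Module ℝ V] {q : V → ℝ}

theorem map_zero_of_smul_eq_mul (hq_hom : ∀ c : ℝ, 0 ≤ c → ∀ x : V, q (c • x) = c * q x) :
    q 0 = 0 := by
  simpa using hq_hom 0 le_rfl 0

theorem ConvexOn.add_le_of_smul_eq_mul (hq_convex : ConvexOn ℝ Set.univ q)
    (hq_hom : ∀ c : ℝ, 0 ≤ c → ∀ x : V, q (c • x) = c * q x) (x y : V) :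
    q (x + y) ≤ q x + q y := by
  have hmid := hq_convex.2 (Set.mem_univ x) (Set.mem_univ y)
    (by norm_num : (0 : ℝ) ≤ 1 / 2) (by norm_num : (0 : ℝ) ≤ 1 / 2) (by norm_num)
  have hdouble := hq_hom 2 (by norm_num) ((1 / 2 : ℝ) • x + (1 / 2 : ℝ) • y)
  rw [smul_add, smul_smul, smul_smul] at hdouble
  norm_num at hdouble hmid
  linarith

/-- The inequality behind `q (c • x) ≥ c * q x` for negative `c` is `q x + q (-x) ≥ q 0 = 0`. -/
theorem ConvexOn.mul_le_smul_of_smul_eq_mul (hq_convex : ConvexOn ℝ Set.univ q)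
    (hq_hom : ∀ c : ℝ, 0 ≤ c → ∀ x : V, q (c • x) = c * q x) (c : ℝ) (x : V) :
    c * q x ≤ q (c • x) := by
  rcases le_or_gt 0 c with hc | hc
  · exact (hq_hom c hc x).ge
  · have hsum : q 0 ≤ q x + q (-x) := by
      simpa using hq_convex.add_le_of_smul_eq_mul hq_hom x (-x)
    rw [map_zero_of_smul_eq_mul hq_hom] at hsum
    rw [show c • x = (-c) • (-x) by simp, hq_hom (-c) (by linarith) (-x)]
    nlinarith

theorem ConvexOn.exists_linearMap_le_of_smul_eq_mul (hq_convex : ConvexOn ℝ Set.univ q)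
    (hq_hom : ∀ c : ℝ, 0 ≤ c → ∀ x : V, q (c • x) = c * q x) (v : V) :
    ∃ g : V →ₗ[ℝ] ℝ, (∀ z, g z ≤ q z) ∧ g v = q v := by
  let g₀ : V →ₗ.[ℝ] ℝ := LinearPMap.mkSpanSingleton' v (q v) fun c hcv => by
    rcases smul_eq_zero.mp hcv with rfl | rfl
    · simp
    · simp [map_zero_of_smul_eq_mul hq_hom]
  have hv : v ∈ g₀.domain := Submodule.mem_span_singleton_self v
  obtain ⟨g, hg_ext, hg_le⟩ := exists_extension_of_le_sublinear g₀ q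
    (fun c hc => hq_hom c hc.le) (hq_convex.add_le_of_smul_eq_mul hq_hom) fun ⟨z, hz⟩ => by
      obtain ⟨c, rfl⟩ := Submodule.mem_span_singleton.mp hz
      rw [LinearPMap.mkSpanSingleton'_apply]
      exact hq_convex.mul_le_smul_of_smul_eq_mul hq_hom c v
  refine ⟨g, hg_le, ?_⟩
  rw [hg_ext ⟨v, hv⟩, LinearPMap.mkSpanSingleton'_apply_self]

end WeakMinkowskiNorm

theorem LinearMap.continuous_of_le_of_continuous {V : Type*} [AddCommGroup V] [Module ℝ V]
    [TopologicalSpace V] [IsTopologicalAddGroup V] {q : V → ℝ} (hq_cont : Continuous q)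
    (hq_zero : q 0 = 0) (g : V →ₗ[ℝ] ℝ) (hg : ∀ x, g x ≤ q x) : Continuous g := by
  refine continuous_of_continuousAt_zero g.toAddMonoidHom ?_
  have hupper : Tendsto q (𝓝 0) (𝓝 0) := hq_zero ▸ hq_cont.tendsto 0
  have hlower : Tendsto (fun x => -q (-x)) (𝓝 (0 : V)) (𝓝 0) := by
    simpa [hq_zero] using ((hq_cont.comp continuous_neg).tendsto 0).neg
  have hsqueeze : Tendsto g (𝓝 0) (𝓝 0) :=
    tendsto_of_tendsto_of_tendsto_of_le_of_le hlower hupper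
      (fun x => by simpa using neg_le_neg (hg (-x))) hg
  simpa [ContinuousAt] using hsqueeze

section Dual

variable {V : Type*} [AddCommGroup V] [Module ℝ V] [TopologicalSpace V]
  [IsTopologicalAddGroup V] {q : V → ℝ}

theorem exists_continuousLinearMap_le_eq (hq_convex : ConvexOn ℝ Set.univ q)
    (hq_hom : ∀ c : ℝ, 0 ≤ c → ∀ x : V, q (c • x) = c * q x) (hq_cont : Continuous q)
    (v : V) : ∃ p : V →L[ℝ] ℝ, (∀ z, p z ≤ q z) ∧ p v = q v := by
  obtain ⟨g, hg_le, hg_v⟩ := hq_convex.exists_linearMap_le_of_smul_eq_mul hq_hom v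
  exact ⟨⟨g, g.continuous_of_le_of_continuous hq_cont (map_zero_of_smul_eq_mul hq_hom) hg_le⟩,
    hg_le, hg_v⟩

theorem isLeast_continuousLinearMap_le_apply_sub_add (hq_convex : ConvexOn ℝ Set.univ q)
    (hq_hom : ∀ c : ℝ, 0 ≤ c → ∀ x : V, q (c • x) = c * q x) (hq_cont : Continuous q)
    (x y : V) (a : ℝ) :
    IsLeast {s : ℝ | ∃ p : V →L[ℝ] ℝ, (∀ z : V, p z ≤ q z) ∧ s = p (x - y) + a}
      (a - q (y - x)) := by
  obtain ⟨p, hp_le, hp_eq⟩ := exists_continuousLinearMap_le_eq hq_convex hq_hom hq_cont (y - x)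
  refine ⟨⟨p, hp_le, ?_⟩, ?_⟩
  · rw [← neg_sub y x, map_neg, hp_eq]
    ring
  · rintro s ⟨p', hp'_le, rfl⟩
    have := hp'_le (y - x)
    rw [← neg_sub y x, map_neg]
    linarith

end Dual

theorem stmt5_general {V : Type*} [AddCommGroup V] [Module ℝ V] [TopologicalSpace V]
    [IsTopologicalAddGroup V]
    (q : V → ℝ) (hq_convex : ConvexOn ℝ Set.univ q)
    (hq_hom : ∀ (c : ℝ), 0 ≤ c → ∀ x : V, q (c • x) = c * q x)
    (hq_cont : Continuous q) (f : V → ℝ) :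
    (∀ x y : V, f x - f y ≤ q (x - y)) ↔
      ∀ x : V,
        (∀ y : V, ∃ r : ℝ,
          IsLeast {s : ℝ | ∃ p : V →L[ℝ] ℝ, (∀ z : V, p z ≤ q z) ∧ s = p (x - y) + f y} r) ∧
        IsGreatest {r : ℝ | ∃ y : V,
          IsLeast {s : ℝ | ∃ p : V →L[ℝ] ℝ, (∀ z : V, p z ≤ q z) ∧ s = p (x - y) + f y} r}
          (f x) := by
  have inner_min (x y : V) := isLeast_continuousLinearMap_le_apply_sub_add hq_convex hq_hom
    hq_cont x y (f y)
  have hq_zero := map_zero_of_smul_eq_mul hq_hom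
  constructor
  · intro hf x
    refine ⟨fun y => ⟨_, inner_min x y⟩, ⟨x, by simpa [hq_zero] using inner_min x x⟩, ?_⟩
    rintro r ⟨y, hr⟩
    rw [hr.unique (inner_min x y)]
    linarith [hf y x]
  · intro h x y
    linarith [(h y).2.2 ⟨x, inner_min y x⟩]

/-- dual maximin version: With `P` the set of continuous linear forms dominated
by a continuous weak Minkowski norm `q`, a function `f : V → ℝ` is nonexpansive with respect
to `q` if and only if, for every `x`, `f x = max_{y} min_{p ∈ P} (p (x - y) + f y)`, the inner
minimum over `P` being attained for each `y` and the outer maximum over `y` being attained. -/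
theorem stmt5 {V : Type*} [AddCommGroup V] [Module ℝ V] [TopologicalSpace V]
    [IsTopologicalAddGroup V] [ContinuousSMul ℝ V]
    (q : V → ℝ) (hq_convex : ConvexOn ℝ Set.univ q)
    (hq_hom : ∀ (c : ℝ), 0 ≤ c → ∀ x : V, q (c • x) = c * q x)
    (hq_cont : Continuous q) (f : V → ℝ) :
    (∀ x y : V, f x - f y ≤ q (x - y)) ↔
      ∀ x : V,
        (∀ y : V, ∃ r : ℝ,
          IsLeast {s : ℝ | ∃ p : V →L[ℝ] ℝ, (∀ z : V, p z ≤ q z) ∧ s = p (x - y) + f y} r) ∧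
        IsGreatest {r : ℝ | ∃ y : V,
          IsLeast {s : ℝ | ∃ p : V →L[ℝ] ℝ, (∀ z : V, p z ≤ q z) ∧ s = p (x - y) + f y} r}
          (f x) :=
  stmt5_general q hq_convex hq_hom hq_cont f
end

section
/- Let (Ω, 𝓕, ℙ) be a probability space, L∞(ℙ) the Banach lattice of essentially bounded real-valued random variables with unit e the a.s. constant function 1, and Δ(ℙ) the set of continuous linear functionals p on L∞(ℙ) with p(e) = 1 and p(X) ≥ 0 whenever X ≥ 0 a.s. Let μ : L∞(ℙ) → ℝ be a risk measure that is positively homogeneous, i.e., μ(λX) = λμ(X) for all λ ≥ 0. Then for every X ∈ L∞(ℙ), μ(X) = min_{Y ∈ L∞(ℙ), μ(Y) = 0} max_{p ∈ Δ(ℙ), p(Y) ≥ 0} p(−X), both the minimum (over Y with μ(Y)=0) and the maximum being attained. -/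
/-!
The essential supremum `N Z = inf {c | Z ≤ c • e}` is a sublinear functional on `L∞(ℙ)`, and every
linear `g ≤ N` is a continuous state: `g e = 1`, `g ≥ 0` and `|g Z| ≤ ‖Z‖`.
If `ρ Y = 0`, then `l • Y - N (l • Y - X) • e ≤ X`, so monotonicity, cash additivity and
homogeneity give `ρ X ≤ N (l • Y - X)` for all `l ≥ 0`. Hahn–Banach applied at `-X` to the
sublinear functional `Z ↦ inf_{l ≥ 0} N (Z + l • Y)` yields a state `p` with `p Y ≥ 0` and
`ρ X ≤ p (-X)`; hence every inner maximum is at least `ρ X`. For `Y = X + ρ X • e` the constraint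
`p Y ≥ 0` reads `p (-X) ≤ ρ X`, so that inner maximum is exactly `ρ X`.
-/

open MeasureTheory
open scoped NNReal ENNReal

structure IsSublinear {E : Type*} [AddCommGroup E] [Module ℝ E] (N : E → ℝ) : Prop where
  map_smul_of_pos : ∀ c : ℝ, 0 < c → ∀ x, N (c • x) = c * N x
  map_add_le : ∀ x y, N (x + y) ≤ N x + N y

namespace IsSublinear

variable {E : Type*} [AddCommGroup E] [Module ℝ E] {N : E → ℝ}

theorem map_zero (hN : IsSublinear N) : N 0 = 0 := by
  have h := hN.map_smul_of_pos 2 two_pos 0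
  rw [smul_zero] at h
  linarith

theorem neg_map_neg_le (hN : IsSublinear N) (x : E) : -N (-x) ≤ N x := by
  have h := hN.map_add_le x (-x)
  rw [add_neg_cancel, hN.map_zero] at h
  linarith

theorem map_smul_ge (hN : IsSublinear N) (c : ℝ) (x : E) : c * N x ≤ N (c • x) := by
  rcases lt_or_ge c 0 with hc | hc
  · have h := hN.neg_map_neg_le (c • x)
    rw [← neg_smul, hN.map_smul_of_pos (-c) (neg_pos.2 hc)] at h
    linarith
  · rcases hc.eq_or_lt with rfl | hc
    · simp [hN.map_zero]
    · exact (hN.map_smul_of_pos c hc x).ge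

theorem exists_linearMap_le_eq (hN : IsSublinear N) (x : E) :
    ∃ g : E →ₗ[ℝ] ℝ, (∀ z, g z ≤ N z) ∧ g x = N x := by
  have hker : ∀ c : ℝ, c • x = 0 → c • N x = 0 := fun c hcx => by
    rcases smul_eq_zero.1 hcx with rfl | rfl
    · exact zero_smul ℝ _
    · rw [hN.map_zero, smul_zero]
  let f : E →ₗ.[ℝ] ℝ := LinearPMap.mkSpanSingleton' x (N x) hker
  obtain ⟨g, hgf, hgN⟩ := exists_extension_of_le_sublinear f N hN.map_smul_of_pos hN.map_add_le
    (by
      rintro ⟨z, hz⟩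
      obtain ⟨c, rfl⟩ := Submodule.mem_span_singleton.1 hz
      rw [LinearPMap.mkSpanSingleton'_apply]
      exact hN.map_smul_ge c x)
  exact ⟨g, hgN, (hgf ⟨x, Submodule.mem_span_singleton_self x⟩).trans
    (LinearPMap.mkSpanSingleton'_apply_self x (N x) hker _)⟩

end IsSublinear

section RayInf

variable {E : Type*} [AddCommGroup E] [Module ℝ E] {N : E → ℝ} {y : E}

/-- A linear map below `rayInf N y` is below `N` and nonnegative at `y`. -/
noncomputable def rayInf (N : E → ℝ) (y z : E) : ℝ := ⨅ l : ℝ≥0, N (z + (l : ℝ) • y)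

theorem IsSublinear.bddBelow_range_add_smul (hN : IsSublinear N) (hy : 0 ≤ N y) (z : E) :
    BddBelow (Set.range fun l : ℝ≥0 => N (z + (l : ℝ) • y)) := by
  refine ⟨-N (-z), ?_⟩
  rintro _ ⟨l, rfl⟩
  dsimp only
  have h₁ := hN.map_add_le (z + (l : ℝ) • y) (-z)
  have h₂ := hN.map_smul_ge l y
  rw [add_neg_cancel_comm] at h₁
  linarith [mul_nonneg l.coe_nonneg hy]

theorem IsSublinear.rayInf_le (hN : IsSublinear N) (hy : 0 ≤ N y) (z : E) (l : ℝ≥0) :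
    rayInf N y z ≤ N (z + (l : ℝ) • y) :=
  ciInf_le (hN.bddBelow_range_add_smul hy z) l

theorem le_rayInf {z : E} {m : ℝ} (h : ∀ l : ℝ≥0, m ≤ N (z + (l : ℝ) • y)) : m ≤ rayInf N y z :=
  le_ciInf h

theorem IsSublinear.rayInf_smul_le (hN : IsSublinear N) (hy : 0 ≤ N y) {c : ℝ} (hc : 0 < c)
    (z : E) : rayInf N y (c • z) ≤ c * rayInf N y z := by
  rw [← div_le_iff₀' hc]
  refine le_rayInf fun l => ?_
  rw [div_le_iff₀' hc, ← hN.map_smul_of_pos c hc, smul_add, smul_smul]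
  exact hN.rayInf_le hy _ ⟨c * l, mul_nonneg hc.le l.2⟩

theorem IsSublinear.isSublinear_rayInf (hN : IsSublinear N) (hy : 0 ≤ N y) :
    IsSublinear (rayInf N y) where
  map_smul_of_pos c hc z := by
    refine le_antisymm (hN.rayInf_smul_le hy hc z) ?_
    have h := hN.rayInf_smul_le hy (inv_pos.2 hc) (c • z)
    rw [inv_smul_smul₀ hc.ne'] at h
    rwa [← le_inv_mul_iff₀ hc]
  map_add_le z w := by
    rw [← sub_le_iff_le_add]
    refine le_rayInf fun l => ?_
    rw [sub_le_comm]
    refine le_rayInf fun k => ?_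
    rw [sub_le_iff_le_add']
    calc rayInf N y (z + w) ≤ N (z + w + ((l + k : ℝ≥0) : ℝ) • y) := hN.rayInf_le hy _ _
      _ = N ((z + (l : ℝ) • y) + (w + (k : ℝ) • y)) := by
          rw [NNReal.coe_add, add_smul]; abel_nf
      _ ≤ N (z + (l : ℝ) • y) + N (w + (k : ℝ) • y) := hN.map_add_le _ _

theorem IsSublinear.exists_linearMap_le_of_forall_le (hN : IsSublinear N) {x : E} {m : ℝ}
    (h : ∀ l : ℝ, 0 ≤ l → m ≤ N (x + l • y)) :
    ∃ g : E →ₗ[ℝ] ℝ, (∀ z, g z ≤ N z) ∧ 0 ≤ g y ∧ m ≤ g x := by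
  have hy : 0 ≤ N y := by
    by_contra! hy
    have hx : m ≤ N x := by simpa using h 0 le_rfl
    set l := (N x - m + 1) / (-N y)
    have hl₀ : 0 < l := div_pos (by linarith) (by linarith)
    have hl : l * N y = -(N x - m + 1) := by
      simp only [l]; field_simp [hy.ne]
    have := (h l hl₀.le).trans (hN.map_add_le x (l • y))
    linarith [hN.map_smul_of_pos l hl₀ y]
  obtain ⟨g, hg, hgx⟩ := (hN.isSublinear_rayInf hy).exists_linearMap_le_eq x
  refine ⟨g, fun z => (hg z).trans (by simpa using hN.rayInf_le hy z 0), ?_, ?_⟩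
  · have h₁ := (hg (-y)).trans (hN.rayInf_le hy (-y) 1)
    rw [NNReal.coe_one, one_smul, neg_add_cancel, hN.map_zero, map_neg] at h₁
    linarith
  · rw [hgx]
    exact le_rayInf fun l => h l l.2

end RayInf

section Linfty

instance MeasureTheory.Lp.instPosSMulMono {α : Type*} [MeasurableSpace α] {μ : Measure α}
    {p : ℝ≥0∞} : PosSMulMono ℝ (Lp ℝ p μ) where
  smul_le_smul_of_nonneg_left c hc Z W h := by
    rw [← Lp.coeFn_le] at h ⊢
    filter_upwards [h, Lp.coeFn_smul c Z, Lp.coeFn_smul c W] with ω h₁ h₂ h₃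
    rw [h₂, h₃]
    exact smul_le_smul_of_nonneg_left h₁ hc

theorem MeasureTheory.Lp.ae_norm_le_norm_top {α E : Type*} [MeasurableSpace α] {μ : Measure α}
    [NormedAddCommGroup E] (Z : Lp E ∞ μ) : ∀ᵐ ω ∂μ, ‖Z ω‖ ≤ ‖Z‖ := by
  have hZ : eLpNormEssSup Z μ ≠ ∞ := by
    simpa only [eLpNorm_exponent_top] using Lp.eLpNorm_ne_top Z
  filter_upwards [enorm_ae_le_eLpNormEssSup Z μ] with ω hω
  simpa [Lp.norm_def, eLpNorm_exponent_top] using ENNReal.toReal_mono hZ hω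

variable {Ω : Type*} [MeasurableSpace Ω] {ℙ : Measure Ω} [IsFiniteMeasure ℙ]

variable (ℙ) in
noncomputable def linftyOne : Lp ℝ ∞ ℙ := MemLp.toLp (fun _ => (1 : ℝ)) (memLp_const 1)

theorem coeFn_linftyOne : ⇑(linftyOne ℙ) =ᵐ[ℙ] fun _ => (1 : ℝ) :=
  MemLp.coeFn_toLp _

theorem coeFn_smul_linftyOne (c : ℝ) : ⇑(c • linftyOne ℙ) =ᵐ[ℙ] fun _ => c := by
  filter_upwards [Lp.coeFn_smul c (linftyOne ℙ), coeFn_linftyOne (ℙ := ℙ)] with ω h₁ h₂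
  rw [h₁, Pi.smul_apply, h₂, smul_eq_mul, mul_one]

theorem le_norm_smul_linftyOne (Z : Lp ℝ ∞ ℙ) : Z ≤ ‖Z‖ • linftyOne ℙ := by
  rw [← Lp.coeFn_le]
  filter_upwards [Lp.ae_norm_le_norm_top Z, coeFn_smul_linftyOne ‖Z‖] with ω h₁ h₂
  rw [h₂]
  exact (le_abs_self _).trans h₁

theorem le_of_smul_linftyOne_le [NeZero ℙ] {c d : ℝ} (h : c • linftyOne ℙ ≤ d • linftyOne ℙ) :
    c ≤ d := by
  rw [← Lp.coeFn_le] at h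
  obtain ⟨ω, hω, hc, hd⟩ := (h.and ((coeFn_smul_linftyOne c).and (coeFn_smul_linftyOne d))).exists
  rwa [hc, hd] at hω

variable (ℙ) in
noncomputable def linftyEssSup (Z : Lp ℝ ∞ ℙ) : ℝ := sInf {c : ℝ | Z ≤ c • linftyOne ℙ}

theorem bddBelow_setOf_le_smul_linftyOne [NeZero ℙ] (Z : Lp ℝ ∞ ℙ) :
    BddBelow {c : ℝ | Z ≤ c • linftyOne ℙ} := by
  refine ⟨-‖Z‖, fun c hc => le_of_smul_linftyOne_le (ℙ := ℙ) ?_⟩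
  have h := le_norm_smul_linftyOne (-Z)
  rw [norm_neg, neg_le, ← neg_smul] at h
  exact h.trans hc

theorem linftyEssSup_le [NeZero ℙ] {Z : Lp ℝ ∞ ℙ} {c : ℝ} (h : Z ≤ c • linftyOne ℙ) :
    linftyEssSup ℙ Z ≤ c :=
  csInf_le (bddBelow_setOf_le_smul_linftyOne Z) h

theorem le_linftyEssSup_smul_linftyOne [NeZero ℙ] (Z : Lp ℝ ∞ ℙ) :
    Z ≤ linftyEssSup ℙ Z • linftyOne ℙ := by
  have hclosed : IsClosed {c : ℝ | Z ≤ c • linftyOne ℙ} :=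
    isClosed_le continuous_const (continuous_id.smul continuous_const)
  exact hclosed.csInf_mem ⟨_, le_norm_smul_linftyOne Z⟩ (bddBelow_setOf_le_smul_linftyOne Z)

theorem linftyEssSup_le_norm [NeZero ℙ] (Z : Lp ℝ ∞ ℙ) : linftyEssSup ℙ Z ≤ ‖Z‖ :=
  linftyEssSup_le (le_norm_smul_linftyOne Z)

theorem isSublinear_linftyEssSup [NeZero ℙ] : IsSublinear (linftyEssSup ℙ) where
  map_smul_of_pos c hc Z := by
    have hle : ∀ {a : ℝ}, 0 < a → ∀ Z : Lp ℝ ∞ ℙ,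
        linftyEssSup ℙ (a • Z) ≤ a * linftyEssSup ℙ Z := fun ha Z => linftyEssSup_le <| by
        rw [mul_smul]; exact smul_le_smul_of_nonneg_left (le_linftyEssSup_smul_linftyOne Z) ha.le
    refine le_antisymm (hle hc Z) ?_
    have h := hle (inv_pos.2 hc) (c • Z)
    rw [inv_smul_smul₀ hc.ne'] at h
    rwa [← le_inv_mul_iff₀ hc]
  map_add_le Z W := linftyEssSup_le <| by
    rw [add_smul]
    exact add_le_add (le_linftyEssSup_smul_linftyOne Z) (le_linftyEssSup_smul_linftyOne W)

end Linfty

section Dual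

variable {Ω : Type*} [MeasurableSpace Ω] {ℙ : Measure Ω} [IsFiniteMeasure ℙ] [NeZero ℙ]
  {g : Lp ℝ ∞ ℙ →ₗ[ℝ] ℝ}

theorem abs_le_norm_of_le_linftyEssSup (hg : ∀ Z, g Z ≤ linftyEssSup ℙ Z) (Z : Lp ℝ ∞ ℙ) :
    |g Z| ≤ ‖Z‖ := by
  have h := (hg (-Z)).trans (linftyEssSup_le_norm (-Z))
  rw [map_neg, norm_neg] at h
  exact abs_le.2 ⟨by linarith, (hg Z).trans (linftyEssSup_le_norm Z)⟩

theorem map_linftyOne_of_le_linftyEssSup (hg : ∀ Z, g Z ≤ linftyEssSup ℙ Z) :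
    g (linftyOne ℙ) = 1 := by
  have h₁ := (hg (linftyOne ℙ)).trans (linftyEssSup_le (one_smul ℝ _).ge)
  have h₂ := (hg (-linftyOne ℙ)).trans (linftyEssSup_le (neg_one_smul ℝ _).ge)
  rw [map_neg] at h₂
  linarith

theorem nonneg_of_le_linftyEssSup (hg : ∀ Z, g Z ≤ linftyEssSup ℙ Z) {Z : Lp ℝ ∞ ℙ}
    (hZ : 0 ≤ Z) : 0 ≤ g Z := by
  have hZ' : -Z ≤ (0 : ℝ) • linftyOne ℙ := by rw [zero_smul]; exact neg_nonpos.2 hZ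
  have h := (hg (-Z)).trans (linftyEssSup_le hZ')
  rw [map_neg] at h
  linarith

variable {ρ : Lp ℝ ∞ ℙ → ℝ}

theorem riskMeasure_le_linftyEssSup (hmono : ∀ X Y : Lp ℝ ∞ ℙ, X ≤ Y → ρ Y ≤ ρ X)
    (hadd : ∀ (X : Lp ℝ ∞ ℙ) (c : ℝ), ρ (X + c • linftyOne ℙ) = ρ X - c)
    (hpos : ∀ c : ℝ, 0 ≤ c → ∀ X : Lp ℝ ∞ ℙ, ρ (c • X) = c * ρ X)
    {Y : Lp ℝ ∞ ℙ} (hY : ρ Y = 0) {l : ℝ} (hl : 0 ≤ l) (X : Lp ℝ ∞ ℙ) :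
    ρ X ≤ linftyEssSup ℙ (-X + l • Y) := by
  set c := linftyEssSup ℙ (-X + l • Y)
  have hle : l • Y + (-c) • linftyOne ℙ ≤ X := by
    have h := sub_nonpos.2 (le_linftyEssSup_smul_linftyOne (-X + l • Y))
    rw [show l • Y + (-c) • linftyOne ℙ = (-X + l • Y - c • linftyOne ℙ) + X by
      rw [neg_smul]; abel]
    exact add_le_of_nonpos_left h
  have h := hmono _ _ hle
  rwa [hadd, hpos l hl, hY, mul_zero, zero_sub, neg_neg] at h

theorem exists_state_of_riskMeasure_eq_zero (hmono : ∀ X Y : Lp ℝ ∞ ℙ, X ≤ Y → ρ Y ≤ ρ X)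
    (hadd : ∀ (X : Lp ℝ ∞ ℙ) (c : ℝ), ρ (X + c • linftyOne ℙ) = ρ X - c)
    (hpos : ∀ c : ℝ, 0 ≤ c → ∀ X : Lp ℝ ∞ ℙ, ρ (c • X) = c * ρ X)
    {Y : Lp ℝ ∞ ℙ} (hY : ρ Y = 0) (X : Lp ℝ ∞ ℙ) :
    ∃ p : Lp ℝ ∞ ℙ →L[ℝ] ℝ, (p (linftyOne ℙ) = 1 ∧ ∀ Z, 0 ≤ Z → 0 ≤ p Z) ∧
      0 ≤ p Y ∧ ρ X ≤ p (-X) := by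
  obtain ⟨g, hg, hgY, hgX⟩ := isSublinear_linftyEssSup.exists_linearMap_le_of_forall_le
    fun l hl => riskMeasure_le_linftyEssSup hmono hadd hpos hY hl X
  refine ⟨g.mkContinuous 1 fun Z => ?_, ⟨map_linftyOne_of_le_linftyEssSup hg,
    fun Z => nonneg_of_le_linftyEssSup hg⟩, hgY, hgX⟩
  rw [one_mul, Real.norm_eq_abs]
  exact abs_le_norm_of_le_linftyEssSup hg Z

end Dual

/-- Let `(Ω, 𝓕, ℙ)` be a probability space, `L∞(ℙ)` the space of essentially
bounded random variables with unit `e` (the a.s. constant `1`), and `Δ(ℙ)` the set of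
continuous linear functionals `p` with `p e = 1` and `p X ≥ 0` whenever `X ≥ 0` a.s.
If `ρ : L∞(ℙ) → ℝ` is a positively homogeneous risk measure, then for every `X`,
`ρ X = min_{Y : ρ Y = 0} max_{p ∈ Δ(ℙ), p Y ≥ 0} p (-X)`, both the minimum and maximum
being attained. -/
theorem stmt15 {Ω : Type*} [MeasurableSpace Ω] (ℙ : Measure Ω) [IsProbabilityMeasure ℙ]
    (e : Lp ℝ ⊤ ℙ) (he : e = MemLp.toLp (fun _ : Ω => (1 : ℝ)) (memLp_const 1))
    (ρ : Lp ℝ ⊤ ℙ → ℝ)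
    (hmono : ∀ X Y : Lp ℝ ⊤ ℙ, X ≤ Y → ρ Y ≤ ρ X)
    (hadd : ∀ (X : Lp ℝ ⊤ ℙ) (c : ℝ), ρ (X + c • e) = ρ X - c)
    (hpos : ∀ (c : ℝ), 0 ≤ c → ∀ X : Lp ℝ ⊤ ℙ, ρ (c • X) = c * ρ X) :
    ∀ X : Lp ℝ ⊤ ℙ,
      IsLeast {r : ℝ | ∃ Y : Lp ℝ ⊤ ℙ, ρ Y = 0 ∧
        IsGreatest {s : ℝ | ∃ p : Lp ℝ ⊤ ℙ →L[ℝ] ℝ,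
          ((p e = 1 ∧ ∀ Z : Lp ℝ ⊤ ℙ, 0 ≤ Z → 0 ≤ p Z) ∧ 0 ≤ p Y) ∧ s = p (-X)} r}
        (ρ X) := by
  obtain rfl : e = linftyOne ℙ := he
  intro X
  have hstate := fun (Y : Lp ℝ ⊤ ℙ) (hY : ρ Y = 0) =>
    exists_state_of_riskMeasure_eq_zero hmono hadd hpos hY X
  have hY₀ : ρ (X + ρ X • linftyOne ℙ) = 0 := by rw [hadd, sub_self]
  have hshift : ∀ p : Lp ℝ ⊤ ℙ →L[ℝ] ℝ, p (linftyOne ℙ) = 1 →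
      p (-X) = ρ X - p (X + ρ X • linftyOne ℙ) := fun p hp => by
    rw [map_add, map_smul, hp, map_neg, smul_eq_mul, mul_one]; ring
  refine ⟨⟨_, hY₀, ?_, ?_⟩, ?_⟩
  · obtain ⟨p, hp, hpY₀, hpX⟩ := hstate _ hY₀
    exact ⟨p, ⟨hp, hpY₀⟩, le_antisymm hpX (by linarith [hshift p hp.1])⟩
  · rintro _ ⟨p, ⟨hp, hpY₀⟩, rfl⟩
    linarith [hshift p hp.1]
  · rintro r ⟨Y, hY, hr⟩
    obtain ⟨p, hp, hpY, hpX⟩ := hstate Y hY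
    exact hpX.trans (hr.2 ⟨p, ⟨hp, hpY⟩, rfl⟩)
end
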